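/- Let G be a finite-dimensional Lie group acting smoothly and properly on a finite-dimensional Hausdorff second-countable smooth manifold M without boundary. Let U ⊆ M be an open G-invariant subset (g·U = U for all g ∈ G) and let f : M → ℝ be a function that is smooth on U and satisfies f(g·x) = f(x) for all g ∈ G and x ∈ U. Then for every z ∈ U there exist an open G-invariant set V with z ∈ V ⊆ U and a smooth function F : M → ℝ with F(g·x) = F(x) for all g ∈ G and x ∈ M, such that F coincides with f on V. -/

import Mathlib

open scoped Manifold ContDiff Topology
open Set Function MeasureTheory Filter

/-!
Take a smooth bump function `φ` with `φ z = 1` and compact support inside `U`, and average `φ` and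
`φ f` over `G` against a left Haar measure: `c x = ∫ φ (a⁻¹ • x) da` and
`F₀ x = ∫ φ (a⁻¹ • x) f (a⁻¹ • x) da`. Properness makes these integrands compactly supported in `a`,
locally uniformly in `x`, so differentiation under the integral sign shows that both averages are
smooth; they are invariant by left invariance of Haar measure. On `U` the invariance of `f` gives
`F₀ = c f`, and `c x ≠ 0` forces the orbit of `x` to meet `U`, hence `x ∈ U`. So on the invariant
open set `V = {c > c z / 2} ⊆ U` we have `f = F₀ / c`, and `h ∘ c * F₀` is a global smooth invariant
extension as soon as `h` is smooth and agrees with `t ↦ t⁻¹` on `[c z / 2, ∞)`.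
-/

universe uP uF

section ParametricIntegral

theorem integrable_of_continuousOn_uncurry {X α F : Type*} [TopologicalSpace X]
    [TopologicalSpace α] [R1Space α] [MeasurableSpace α] [OpensMeasurableSpace α]
    {μ : Measure α} [IsFiniteMeasureOnCompacts μ] [NormedAddCommGroup F] {k : X → α → F}
    {s : Set X} {K : Set α} (hk : ContinuousOn (uncurry k) (s ×ˢ univ)) (hK : IsCompact K)
    (hks : ∀ p ∈ s, ∀ a ∉ K, k p a = 0) {p : X} (hp : p ∈ s) : Integrable (k p) μ :=
  (hk.comp_continuous (.prodMk_right p) fun _ => ⟨hp, trivial⟩).integrable_of_hasCompactSupport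
    (.intro hK (hks p hp))

theorem exists_norm_le_indicator_of_continuousOn_uncurry {X α F : Type*} [TopologicalSpace X]
    [TopologicalSpace α] [NormedAddCommGroup F] {k : X → α → F} {s B : Set X} {K : Set α}
    (hk : ContinuousOn (uncurry k) (s ×ˢ univ)) (hK : IsCompact K)
    (hks : ∀ p ∈ s, ∀ a ∉ K, k p a = 0) (hB : IsCompact B) (hBs : B ⊆ s) :
    ∃ C, ∀ p ∈ B, ∀ a, ‖k p a‖ ≤ K.indicator (fun _ => C) a := by
  obtain ⟨C, hC⟩ := (hB.prod hK).exists_bound_of_continuousOn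
    (hk.mono (prod_mono hBs (subset_univ K)))
  refine ⟨C, fun p hp a => ?_⟩
  by_cases ha : a ∈ K
  · simpa [indicator_of_mem ha] using hC (p, a) ⟨hp, ha⟩
  · simp [indicator_of_notMem ha, hks p (hBs hp) a ha]

theorem fderiv_fst_eq_zero_of_notMem {P α F : Type*} [NormedAddCommGroup P] [NormedSpace ℝ P]
    [NormedAddCommGroup F] [NormedSpace ℝ F] {k : P → α → F} {s : Set P} {K : Set α}
    (hs : IsOpen s) (hks : ∀ p ∈ s, ∀ a ∉ K, k p a = 0) :
    ∀ p ∈ s, ∀ a ∉ K, fderiv ℝ (k · a) p = 0 := fun p hp a ha => by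
  have : (k · a) =ᶠ[𝓝 p] fun _ => 0 := eventually_of_mem (hs.mem_nhds hp) fun q hq => hks q hq a ha
  rw [this.fderiv_eq, fderiv_const_apply]

variable {E : Type*} [NormedAddCommGroup E] [NormedSpace ℝ E]
  {H : Type*} [TopologicalSpace H] {I : ModelWithCorners ℝ E H}
  {α : Type*} [TopologicalSpace α] [ChartedSpace H α]
  [IsManifold I ∞ α] {P : Type uP} [NormedAddCommGroup P] [NormedSpace ℝ P] {s : Set P}

theorem contMDiffOn_fderiv_fst {F : Type*} [NormedAddCommGroup F]
    [NormedSpace ℝ F] {k : P → α → F} (hs : IsOpen s)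
    (hk : ContMDiffOn (𝓘(ℝ, P).prod I) 𝓘(ℝ, F) ∞ (uncurry k) (s ×ˢ univ)) :
    ContMDiffOn (𝓘(ℝ, P).prod I) 𝓘(ℝ, P →L[ℝ] F) ∞
      (fun q : P × α => fderiv ℝ (k · q.2) q.1) (s ×ˢ univ) := by
  intro q hq
  have hk' : ContMDiffAt ((𝓘(ℝ, P).prod I).prod 𝓘(ℝ, P)) 𝓘(ℝ, F) ∞
      (uncurry fun (q : P × α) (p : P) => k p q.2) (q, q.1) :=
    (hk.contMDiffAt ((hs.prod isOpen_univ).mem_nhds hq)).comp (q, q.1)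
      (contMDiff_snd.prodMk (contMDiff_snd.comp contMDiff_fst)).contMDiffAt
  have := hk'.mfderiv (m := ∞) (fun (q : P × α) (p : P) => k p q.2) Prod.fst contMDiffAt_fst
    (by simp)
  simp only [inTangentCoordinates_model_space, mfderiv_eq_fderiv] at this
  exact this.contMDiffWithinAt

variable [FiniteDimensional ℝ P] [MeasurableSpace α] [OpensMeasurableSpace α] [T2Space α]
  {μ : Measure α} [IsFiniteMeasureOnCompacts μ] {K : Set α}

theorem hasFDerivAt_integral_of_contMDiffOn {F : Type*} [NormedAddCommGroup F]
    [NormedSpace ℝ F] [CompleteSpace F] {k : P → α → F} (hs : IsOpen s)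
    (hk : ContMDiffOn (𝓘(ℝ, P).prod I) 𝓘(ℝ, F) ∞ (uncurry k) (s ×ˢ univ)) (hK : IsCompact K)
    (hks : ∀ p ∈ s, ∀ a ∉ K, k p a = 0) {p₀ : P} (hp₀ : p₀ ∈ s) :
    HasFDerivAt (fun p => ∫ a, k p a ∂μ) (∫ a, fderiv ℝ (k · a) p₀ ∂μ) p₀ := by
  have hDk := contMDiffOn_fderiv_fst hs hk
  have hDks := fderiv_fst_eq_zero_of_notMem hs hks
  have hdiff : ∀ a, ∀ p ∈ s, HasFDerivAt (k · a) (fderiv ℝ (k · a) p) p := fun a p hp =>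
    have hka : ContDiffOn ℝ ∞ (k · a) s := contMDiffOn_iff_contDiffOn.1 <|
      hk.comp (contMDiff_id.prodMk contMDiff_const).contMDiffOn fun _ hq => ⟨hq, trivial⟩
    ((hka.differentiableOn (by simp)).differentiableAt (hs.mem_nhds hp)).hasFDerivAt
  obtain ⟨ε, hε, hball⟩ := Metric.nhds_basis_closedBall.mem_iff.1 (hs.mem_nhds hp₀)
  obtain ⟨C, hC⟩ := exists_norm_le_indicator_of_continuousOn_uncurry hDk.continuousOn hK hDks
    (isCompact_closedBall p₀ ε) hball
  refine hasFDerivAt_integral_of_dominated_of_fderiv_le (Metric.closedBall_mem_nhds p₀ hε)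
    ?_ (integrable_of_continuousOn_uncurry hk.continuousOn hK hks hp₀)
    (integrable_of_continuousOn_uncurry hDk.continuousOn hK hDks hp₀).aestronglyMeasurable
    (.of_forall fun a p hp => hC p hp a) ((integrable_indicator_iff hK.measurableSet).2
      (integrableOn_const hK.measure_ne_top)) (.of_forall fun a p hp => hdiff a p (hball hp))
  filter_upwards [hs.mem_nhds hp₀] with p hp
  exact (integrable_of_continuousOn_uncurry hk.continuousOn hK hks hp).aestronglyMeasurable

/-- The induction passes from `F` to `P →L[ℝ] F`, so it runs in a universe containing both. -/
theorem contDiffOn_integral_of_contMDiffOn_aux (hs : IsOpen s) (hK : IsCompact K) (n : ℕ) :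
    ∀ {F : Type max uP uF} [NormedAddCommGroup F] [NormedSpace ℝ F] [CompleteSpace F]
      {k : P → α → F}, ContMDiffOn (𝓘(ℝ, P).prod I) 𝓘(ℝ, F) ∞ (uncurry k) (s ×ˢ univ) →
      (∀ p ∈ s, ∀ a ∉ K, k p a = 0) → ContDiffOn ℝ n (fun p => ∫ a, k p a ∂μ) s := by
  induction n with
  | zero =>
    intro F _ _ _ k hk hks
    exact contDiffOn_zero.2 <| continuousOn_integral_of_compact_support hK hk.continuousOn
      fun p a hp ha => hks p hp a ha
  | succ n ih =>
    intro F _ _ _ k hk hks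
    have hder p (hp : p ∈ s) := hasFDerivAt_integral_of_contMDiffOn (μ := μ) hs hk hK hks hp
    rw [Nat.cast_succ, contDiffOn_succ_iff_fderiv_of_isOpen hs]
    refine ⟨fun p hp => (hder p hp).differentiableAt.differentiableWithinAt, by simp, ?_⟩
    exact (ih (contMDiffOn_fderiv_fst hs hk) (fderiv_fst_eq_zero_of_notMem hs hks)).congr
      fun p hp => (hder p hp).fderiv

theorem contDiffOn_integral_of_contMDiffOn {F : Type uF} [NormedAddCommGroup F]
    [NormedSpace ℝ F] [CompleteSpace F] {k : P → α → F} (hs : IsOpen s)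
    (hk : ContMDiffOn (𝓘(ℝ, P).prod I) 𝓘(ℝ, F) ∞ (uncurry k) (s ×ˢ univ)) (hK : IsCompact K)
    (hks : ∀ p ∈ s, ∀ a ∉ K, k p a = 0) :
    ContDiffOn ℝ ∞ (fun p => ∫ a, k p a ∂μ) s := by
  let L : ULift.{uP} F ≃L[ℝ] F := ContinuousLinearEquiv.ulift
  have hlift : ∀ n : ℕ, ContDiffOn ℝ n (fun p => ∫ a, L.symm (k p a) ∂μ) s := fun n =>
    contDiffOn_integral_of_contMDiffOn_aux hs hK n
      ((L.symm : F →L[ℝ] ULift F).contMDiff.comp_contMDiffOn hk)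
      fun p hp a ha => by rw [hks p hp a ha, map_zero]
  refine contDiffOn_infty.2 fun n => ((L : ULift F →L[ℝ] F).contDiff.comp_contDiffOn
    (hlift n)).congr fun p _ => ?_
  simp only [comp_apply, ContinuousLinearEquiv.coe_coe, ← L.integral_comp_comm,
    L.apply_symm_apply]

end ParametricIntegral

section OrbitIntegral

variable {G M : Type*} [Group G] [MulAction G M]

theorem image_smul_preimage_of_invariant {β : Type*} {c : M → β}
    (hc : ∀ (g : G) x, c (g • x) = c x) (S : Set β) (g : G) :
    (fun x : M => g • x) '' (c ⁻¹' S) = c ⁻¹' S := by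
  ext x
  constructor
  · rintro ⟨y, hy, rfl⟩
    simpa [hc] using hy
  · exact fun hx => ⟨g⁻¹ • x, by simpa [hc] using hx, smul_inv_smul g x⟩

theorem isCompact_setOf_inv_smul_mem [TopologicalSpace G] [ContinuousInv G] [TopologicalSpace M]
    (hproper : IsProperMap fun p : G × M => (p.1 • p.2, p.2)) {L C : Set M} (hL : IsCompact L)
    (hC : IsCompact C) : IsCompact {a : G | ∃ y ∈ C, a⁻¹ • y ∈ L} := by
  convert ((hproper.isCompact_preimage (hL.prod hC)).image continuous_fst).image continuous_inv
  ext a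
  simp [and_comm]

theorem integrable_inv_smul [TopologicalSpace G] [IsTopologicalGroup G] [MeasurableSpace G]
    [OpensMeasurableSpace G] {μ : Measure G} [IsFiniteMeasureOnCompacts μ] [TopologicalSpace M]
    [ContinuousSMul G M] (hproper : IsProperMap fun p : G × M => (p.1 • p.2, p.2))
    {E : Type*} [NormedAddCommGroup E] {ψ : M → E} (hψ : Continuous ψ) (hψc : HasCompactSupport ψ)
    (x : M) : Integrable (fun a : G => ψ (a⁻¹ • x)) μ :=
  (show Continuous fun a : G => ψ (a⁻¹ • x) by fun_prop).integrable_of_hasCompactSupport <|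
    .intro (isCompact_setOf_inv_smul_mem hproper hψc isCompact_singleton) fun a ha =>
      image_eq_zero_of_notMem_tsupport fun h => ha ⟨x, rfl, h⟩

variable {F : Type*} [NormedAddCommGroup F] [NormedSpace ℝ F] [MeasurableSpace G] (μ : Measure G)

noncomputable def orbitIntegral (ψ : M → F) (x : M) : F := ∫ a, ψ (a⁻¹ • x) ∂μ

variable {μ}

theorem orbitIntegral_smul [MeasurableMul G] [μ.IsMulLeftInvariant] (ψ : M → F) (g : G) (x : M) :
    orbitIntegral μ ψ (g • x) = orbitIntegral μ ψ x := by
  rw [orbitIntegral, orbitIntegral, ← integral_mul_left_eq_self _ g]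
  simp [mul_smul]

theorem exists_inv_smul_mem_support_of_orbitIntegral_ne_zero {ψ : M → F} {x : M}
    (hx : orbitIntegral μ ψ x ≠ 0) : ∃ a : G, a⁻¹ • x ∈ support ψ := by
  by_contra! h
  exact hx (integral_eq_zero_of_ae (.of_forall fun a => notMem_support.1 (h a)))

theorem orbitIntegral_mul_of_forall_smul_eq (ψ : M → ℝ) {f : M → ℝ} {x : M}
    (hf : ∀ g : G, f (g • x) = f x) :
    orbitIntegral μ (fun y => ψ y * f y) x = orbitIntegral μ ψ x * f x := by
  simp only [orbitIntegral, hf, integral_mul_const]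

theorem orbitIntegral_pos [TopologicalSpace G] [IsTopologicalGroup G] [OpensMeasurableSpace G]
    [IsFiniteMeasureOnCompacts μ] [μ.IsOpenPosMeasure] [TopologicalSpace M] [ContinuousSMul G M]
    (hproper : IsProperMap fun p : G × M => (p.1 • p.2, p.2)) {ψ : M → ℝ} (hψ : Continuous ψ)
    (hψc : HasCompactSupport ψ) (hψ₀ : 0 ≤ ψ) {x : M} (hx : 0 < ψ x) :
    0 < orbitIntegral μ ψ x := by
  have hcont : Continuous fun a : G => ψ (a⁻¹ • x) := by fun_prop
  rw [orbitIntegral, integral_pos_iff_support_of_nonneg (fun a => hψ₀ (a⁻¹ • x))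
    (integrable_inv_smul hproper hψ hψc x)]
  exact hcont.isOpen_support.measure_pos μ ⟨1, by simpa using hx.ne'⟩

end OrbitIntegral

section SmoothAction

variable {E : Type*} [NormedAddCommGroup E] [NormedSpace ℝ E]
  {H : Type*} [TopologicalSpace H] {I : ModelWithCorners ℝ E H}
  {G : Type*} [TopologicalSpace G] [ChartedSpace H G] [Group G] [LieGroup I ∞ G]
  [T2Space G] [MeasurableSpace G] [OpensMeasurableSpace G] {μ : Measure G}
  [IsFiniteMeasureOnCompacts μ]
  {E' : Type*} [NormedAddCommGroup E'] [NormedSpace ℝ E'] [FiniteDimensional ℝ E']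
  {H' : Type*} [TopologicalSpace H'] {J : ModelWithCorners ℝ E' H'} [J.Boundaryless]
  {M : Type*} [TopologicalSpace M] [LocallyCompactSpace M] [ChartedSpace H' M]
  [IsManifold J ∞ M] [MulAction G M]

theorem contMDiff_orbitIntegral (hsmooth : ContMDiff (I.prod J) J ∞ fun p : G × M => p.1 • p.2)
    (hproper : IsProperMap fun p : G × M => (p.1 • p.2, p.2)) {F : Type*} [NormedAddCommGroup F]
    [NormedSpace ℝ F] [CompleteSpace F] {ψ : M → F} (hψ : ContMDiff J 𝓘(ℝ, F) ∞ ψ)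
    (hψc : HasCompactSupport ψ) : ContMDiff J 𝓘(ℝ, F) ∞ (orbitIntegral μ ψ) := by
  have := topologicalGroup_of_lieGroup I ∞ (G := G)
  intro x₀
  let e := extChartAt J x₀
  obtain ⟨C, hCc, hC⟩ := exists_compact_mem_nhds x₀
  let s := e.target ∩ e.symm ⁻¹' interior C
  have hs : IsOpen s := (continuousOn_extChartAt_symm x₀).isOpen_inter_preimage
    (isOpen_extChartAt_target x₀) isOpen_interior
  have hx₀ : e x₀ ∈ s :=
    ⟨mem_extChartAt_target x₀, by simpa [e] using mem_interior_iff_mem_nhds.2 hC⟩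
  have hk : ContMDiffOn (𝓘(ℝ, E').prod I) 𝓘(ℝ, F) ∞
      (uncurry fun p (a : G) => ψ (a⁻¹ • e.symm p)) (s ×ˢ univ) :=
    (hψ.comp hsmooth).comp_contMDiffOn <|
      ((contMDiff_inv I ∞).comp contMDiff_snd).contMDiffOn.prodMk <|
        (contMDiffOn_extChartAt_symm x₀).comp contMDiff_fst.contMDiffOn fun q hq => hq.1.1
  have hks : ∀ p ∈ s, ∀ a ∉ {a : G | ∃ y ∈ C, a⁻¹ • y ∈ tsupport ψ}, ψ (a⁻¹ • e.symm p) = 0 :=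
    fun p hp a ha => image_eq_zero_of_notMem_tsupport fun h => ha ⟨_, interior_subset hp.2, h⟩
  have hint := contDiffOn_integral_of_contMDiffOn (μ := μ) hs hk
    (isCompact_setOf_inv_smul_mem hproper hψc hCc) hks
  exact contMDiffAt_iff_source.2
    ((contMDiffOn_iff_contDiffOn.2 hint).contMDiffAt (hs.mem_nhds hx₀)).contMDiffWithinAt

end SmoothAction

theorem exists_contDiff_eq_inv_of_le {δ : ℝ} (hδ : 0 < δ) :
    ∃ h : ℝ → ℝ, ContDiff ℝ ∞ h ∧ ∀ t, δ ≤ t → h t = t⁻¹ := by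
  let θ t := Real.smoothTransition (2 * t / δ - 1)
  have hθ : ContDiff ℝ ∞ θ := Real.smoothTransition.contDiff.comp (by fun_prop)
  refine ⟨fun t => θ t / t, contDiff_iff_contDiffAt.2 fun t₀ => ?_, fun t ht => ?_⟩
  · rcases eq_or_ne t₀ 0 with rfl | ht₀
    · refine (contDiffAt_const (c := 0)).congr_of_eventuallyEq ?_
      filter_upwards [Iio_mem_nhds (half_pos hδ)] with t (ht : t < δ / 2)
      show Real.smoothTransition (2 * t / δ - 1) / t = 0
      rw [Real.smoothTransition.zero_of_nonpos (by rw [sub_nonpos, div_le_one hδ]; linarith),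
        zero_div]
    · exact hθ.contDiffAt.div contDiffAt_id ht₀
  · show Real.smoothTransition (2 * t / δ - 1) / t = t⁻¹
    rw [Real.smoothTransition.one_of_one_le (by rw [le_sub_iff_add_le, le_div_iff₀ hδ]; linarith),
      one_div]

theorem exists_invariant_extension_of_eq_mul {E' H' M G : Type*} [NormedAddCommGroup E']
    [NormedSpace ℝ E'] [TopologicalSpace H'] {J : ModelWithCorners ℝ E' H'} [TopologicalSpace M]
    [ChartedSpace H' M] [Group G] [MulAction G M] {U : Set M} {f c F₀ : M → ℝ}
    (hc : ContMDiff J 𝓘(ℝ, ℝ) ∞ c) (hF₀ : ContMDiff J 𝓘(ℝ, ℝ) ∞ F₀)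
    (hc_inv : ∀ (g : G) x, c (g • x) = c x) (hF₀_inv : ∀ (g : G) x, F₀ (g • x) = F₀ x)
    (hcU : ∀ x, c x ≠ 0 → x ∈ U) (hF₀U : ∀ x ∈ U, F₀ x = c x * f x) {z : M} (hz : 0 < c z) :
    ∃ V : Set M, IsOpen V ∧ z ∈ V ∧ V ⊆ U ∧ (∀ g : G, (fun x : M => g • x) '' V = V) ∧
      ∃ F : M → ℝ, ContMDiff J 𝓘(ℝ, ℝ) ∞ F ∧ (∀ (g : G) (x : M), F (g • x) = F x) ∧
        ∀ x ∈ V, F x = f x := by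
  obtain ⟨h, hh, hh_inv⟩ := exists_contDiff_eq_inv_of_le (half_pos hz)
  have hc_pos : ∀ x ∈ c ⁻¹' Ioi (c z / 2), 0 < c x := fun x hx => (half_pos hz).trans hx
  have hVU : c ⁻¹' Ioi (c z / 2) ⊆ U := fun x hx => hcU x (hc_pos x hx).ne'
  refine ⟨c ⁻¹' Ioi (c z / 2), isOpen_Ioi.preimage hc.continuous, half_lt_self hz, hVU,
    image_smul_preimage_of_invariant hc_inv _, fun x => h (c x) * F₀ x,
    (hh.comp_contMDiff hc).mul hF₀, fun g x => by simp only [hc_inv, hF₀_inv], fun x hx => ?_⟩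
  show h (c x) * F₀ x = f x
  rw [hF₀U x (hVU hx), hh_inv _ hx.le, inv_mul_cancel_left₀ (hc_pos x hx).ne']

theorem invariant_function_extension_property_general
    {E : Type*} [NormedAddCommGroup E] [NormedSpace ℝ E] [FiniteDimensional ℝ E]
    {H : Type*} [TopologicalSpace H] {I : ModelWithCorners ℝ E H}
    {G : Type*} [TopologicalSpace G] [ChartedSpace H G] [Group G] [LieGroup I (⊤ : ℕ∞) G]
    {E' : Type*} [NormedAddCommGroup E'] [NormedSpace ℝ E'] [FiniteDimensional ℝ E']
    {H' : Type*} [TopologicalSpace H'] {J : ModelWithCorners ℝ E' H'} [J.Boundaryless]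
    {M : Type*} [TopologicalSpace M] [T2Space M]
    [ChartedSpace H' M] [IsManifold J (⊤ : ℕ∞) M]
    [MulAction G M]
    (hsmooth : ContMDiff (I.prod J) J (⊤ : ℕ∞) (fun p : G × M => p.1 • p.2))
    (hproper : IsProperMap (fun p : G × M => (p.1 • p.2, p.2)))
    (U : Set M) (hUopen : IsOpen U) (hUinv : ∀ g : G, (fun x : M => g • x) '' U = U)
    (f : M → ℝ) (hfsmooth : ContMDiffOn J 𝓘(ℝ, ℝ) (⊤ : ℕ∞) f U)
    (hfinv : ∀ (g : G), ∀ x ∈ U, f (g • x) = f x) :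
    ∀ z ∈ U, ∃ V : Set M, IsOpen V ∧ z ∈ V ∧ V ⊆ U ∧
      (∀ g : G, (fun x : M => g • x) '' V = V) ∧
      ∃ F : M → ℝ, ContMDiff J 𝓘(ℝ, ℝ) (⊤ : ℕ∞) F ∧
        (∀ (g : G) (x : M), F (g • x) = F x) ∧ ∀ x ∈ V, F x = f x := by
  intro z hz
  have := topologicalGroup_of_lieGroup I ∞ (G := G)
  have : T1Space H := I.isClosedEmbedding.isEmbedding.t1Space
  have : T1Space G := ChartedSpace.t1Space H G
  have : LocallyCompactSpace G := Manifold.locallyCompact_of_finiteDimensional I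
  have : LocallyCompactSpace M := Manifold.locallyCompact_of_finiteDimensional J
  have : ContinuousSMul G M := ⟨hsmooth.continuous⟩
  borelize G
  obtain ⟨φ, -, hφU⟩ := (SmoothBumpFunction.nhds_basis_tsupport (I := J) z).mem_iff.1
    (hUopen.mem_nhds hz)
  have hφf : ContMDiff J 𝓘(ℝ, ℝ) ∞ fun x => φ x * f x := contMDiff_of_tsupport fun x hx =>
    φ.contMDiffAt.mul (hfsmooth.contMDiffAt (hUopen.mem_nhds (hφU (tsupport_mul_subset_left hx))))
  refine exists_invariant_extension_of_eq_mul
    (contMDiff_orbitIntegral (μ := Measure.haar) hsmooth hproper φ.contMDiff φ.hasCompactSupport)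
    (contMDiff_orbitIntegral hsmooth hproper hφf φ.hasCompactSupport.mul_right)
    (orbitIntegral_smul _) (orbitIntegral_smul _) (fun x hx => ?_)
    (fun x hx => orbitIntegral_mul_of_forall_smul_eq _ fun g => hfinv g x hx)
    (orbitIntegral_pos hproper φ.continuous φ.hasCompactSupport (fun _ => φ.nonneg)
      (by simp))
  obtain ⟨a, ha⟩ := exists_inv_smul_mem_support_of_orbitIntegral_ne_zero hx
  have := mem_image_of_mem (a • ·) (hφU (subset_tsupport _ ha))
  rwa [hUinv, smul_inv_smul] at this

/-- Extension property for invariant functions of a proper smooth Lie group action: if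
`U ⊆ M` is open and `G`-invariant and `f : M → ℝ` is smooth on `U` and `G`-invariant on
`U`, then every `z ∈ U` has an open `G`-invariant neighborhood `V ⊆ U` on which `f`
coincides with a globally defined smooth `G`-invariant function `F : M → ℝ`. -/
theorem invariant_function_extension_property
    {E : Type*} [NormedAddCommGroup E] [NormedSpace ℝ E] [FiniteDimensional ℝ E]
    {H : Type*} [TopologicalSpace H] {I : ModelWithCorners ℝ E H} [I.Boundaryless]
    {G : Type*} [TopologicalSpace G] [ChartedSpace H G] [Group G] [LieGroup I (⊤ : ℕ∞) G]
    {E' : Type*} [NormedAddCommGroup E'] [NormedSpace ℝ E'] [FiniteDimensional ℝ E']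
    {H' : Type*} [TopologicalSpace H'] {J : ModelWithCorners ℝ E' H'} [J.Boundaryless]
    {M : Type*} [TopologicalSpace M] [T2Space M] [SecondCountableTopology M]
    [ChartedSpace H' M] [IsManifold J (⊤ : ℕ∞) M]
    [MulAction G M]
    (hsmooth : ContMDiff (I.prod J) J (⊤ : ℕ∞) (fun p : G × M => p.1 • p.2))
    (hproper : IsProperMap (fun p : G × M => (p.1 • p.2, p.2)))
    (U : Set M) (hUopen : IsOpen U) (hUinv : ∀ g : G, (fun x : M => g • x) '' U = U)
    (f : M → ℝ) (hfsmooth : ContMDiffOn J 𝓘(ℝ, ℝ) (⊤ : ℕ∞) f U)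
    (hfinv : ∀ (g : G), ∀ x ∈ U, f (g • x) = f x) :
    ∀ z ∈ U, ∃ V : Set M, IsOpen V ∧ z ∈ V ∧ V ⊆ U ∧
      (∀ g : G, (fun x : M => g • x) '' V = V) ∧
      ∃ F : M → ℝ, ContMDiff J 𝓘(ℝ, ℝ) (⊤ : ℕ∞) F ∧
        (∀ (g : G) (x : M), F (g • x) = F x) ∧ ∀ x ∈ V, F x = f x :=
  invariant_function_extension_property_general hsmooth hproper U hUopen hUinv f hfsmooth hfinv
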